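/- Any disjoint layout λ of n unit squares can be transformed into a disjoint layout λ' with the same orthogonal order and the same y-coordinates (hence the same height), such that W(λ') ≤ W(λ) and W(λ') ∈ [w, w + ε] for some integer w ∈ {1, …, n} and any prescribed ε > 0. -/

import Mathlib

open scoped Classical

/-- An axis-parallel line in the plane: `vert a` is the line `x = a`,
`horiz b` is the line `y = b`. -/
inductive ALine where
  | vert : ℝ → ALine
  | horiz : ℝ → ALine

/-- `a` lies strictly between `u` and `v`. -/
def strictBetween (a u v : ℝ) : Prop := (u < a ∧ a < v) ∨ (v < a ∧ a < u)

/-- An axis-parallel line hits the segment joining `p` and `q` iff it meets the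
relative interior of the segment but neither endpoint. -/
def ALine.hits : ALine → ℝ × ℝ → ℝ × ℝ → Prop
  | .vert a, p, q => strictBetween a p.1 q.1
  | .horiz b, p, q => strictBetween b p.2 q.2

/-- The line contains the point `p`. -/
def ALine.containsPt : ALine → ℝ × ℝ → Prop
  | .vert a, p => p.1 = a
  | .horiz b, p => p.2 = b

/-- The line is vertical. -/
def ALine.isVert : ALine → Prop
  | .vert _ => True
  | .horiz _ => False

/-- The line is horizontal. -/
def ALine.isHoriz : ALine → Prop
  | .vert _ => False
  | .horiz _ => True

/-- Two layouts (assignments of centers to the items indexed by `ι`) have the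
same orthogonal order. -/
def orthOrder {ι : Type*} (f g : ι → ℝ × ℝ) : Prop :=
  ∀ i j : ι,
    ((f i).1 < (f j).1 ↔ (g i).1 < (g j).1) ∧
    ((f i).1 = (f j).1 ↔ (g i).1 = (g j).1) ∧
    ((f i).2 < (f j).2 ↔ (g i).2 < (g j).2) ∧
    ((f i).2 = (f j).2 ↔ (g i).2 = (g j).2)

/-- A layout of unit squares is disjoint iff any two distinct centers are at
distance at least 1 in the `x`- or the `y`-coordinate. -/
def disjointUnitLayout {ι : Type*} (f : ι → ℝ × ℝ) : Prop :=
  ∀ i j : ι, i ≠ j → 1 ≤ |(f i).1 - (f j).1| ∨ 1 ≤ |(f i).2 - (f j).2|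

/-- Width of the bounding box of a layout of unit squares. -/
noncomputable def unitWidth {n : ℕ} (f : Fin n → ℝ × ℝ) : ℝ :=
  (⨆ i, (f i).1) - (⨅ i, (f i).1) + 1

/-- Height of the bounding box of a layout of unit squares. -/
noncomputable def unitHeight {n : ℕ} (f : Fin n → ℝ × ℝ) : ℝ :=
  (⨆ i, (f i).2) - (⨅ i, (f i).2) + 1

/-!
Only the `x`-coordinates change, by a strictly increasing map `φ` with `φ a + 1 ≤ φ b` whenever
`a + 1 ≤ b`: this keeps the orthogonal order and every pair that was separated horizontally stays
separated. For the finite set `S` of `x`-coordinates let `G t` be the largest size of a subset of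
`S ∩ (-∞, t]` whose points are pairwise at distance at least `1`. Then `G` is monotone, jumps by at
least `1` across every distance `≥ 1` ending in `S`, and `G M - G m ≤ M - m` between the extreme
coordinates `m ≤ M`, while `G M ≤ |S| ≤ n`. The convex combination `φ t = θ t + (1 - θ) G t` with
small `θ > 0` therefore works, and its width `G M + θ (M - m + 1 - G M)` lies in `[G M, G M + ε]`.
-/

def UnitSeparated (T : Finset ℝ) : Prop :=
  (T : Set ℝ).Pairwise fun a b => 1 ≤ |a - b|

theorem UnitSeparated.card_le_floor_add_one {T : Finset ℝ} (hT : UnitSeparated T) {m t : ℝ}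
    (hm : ∀ a ∈ T, m ≤ a) (ht : ∀ a ∈ T, a ≤ t) : T.card ≤ ⌊t - m⌋₊ + 1 := by
  -- points at distance `≥ 1` have distinct integer parts
  have hmaps : Set.MapsTo (fun a => ⌊a - m⌋₊) T (Finset.range (⌊t - m⌋₊ + 1)) := fun a ha => by
    simpa [Nat.lt_succ_iff] using Nat.floor_le_floor (by linarith [ht a ha] : a - m ≤ t - m)
  have hinj : Set.InjOn (fun a => ⌊a - m⌋₊) T := by
    intro a ha b hb hab
    by_contra hne
    have hsep := hT ha hb hne
    have ha_lo := Nat.floor_le (sub_nonneg.2 (hm a ha))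
    have hb_lo := Nat.floor_le (sub_nonneg.2 (hm b hb))
    have ha_hi := Nat.lt_floor_add_one (a - m)
    have hb_hi := Nat.lt_floor_add_one (b - m)
    simp only at hab
    rw [hab] at ha_lo ha_hi
    rcases abs_cases (a - b) with ⟨h, _⟩ | ⟨h, _⟩ <;> linarith
  simpa using Finset.card_le_card_of_injOn _ hmaps hinj

noncomputable def sepFamily (S : Finset ℝ) (t : ℝ) : Finset (Finset ℝ) :=
  (S.filter (· ≤ t)).powerset.filter UnitSeparated

theorem mem_sepFamily {S T : Finset ℝ} {t : ℝ} :
    T ∈ sepFamily S t ↔ T ⊆ S ∧ (∀ a ∈ T, a ≤ t) ∧ UnitSeparated T := by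
  simp only [sepFamily, Finset.mem_filter, Finset.mem_powerset, Finset.subset_iff]
  grind

noncomputable def maxSepCard (S : Finset ℝ) (t : ℝ) : ℕ :=
  (sepFamily S t).sup Finset.card

section maxSepCard

variable {S T : Finset ℝ} {a b m t : ℝ}

theorem card_le_maxSepCard (hTS : T ⊆ S) (hTt : ∀ a ∈ T, a ≤ t) (hT : UnitSeparated T) :
    T.card ≤ maxSepCard S t :=
  Finset.le_sup (mem_sepFamily.2 ⟨hTS, hTt, hT⟩)

theorem exists_card_eq_maxSepCard (S : Finset ℝ) (t : ℝ) :
    ∃ T ⊆ S, (∀ a ∈ T, a ≤ t) ∧ UnitSeparated T ∧ T.card = maxSepCard S t := by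
  have hne : (sepFamily S t).Nonempty :=
    ⟨∅, mem_sepFamily.2 ⟨Finset.empty_subset _, by simp, by simp [UnitSeparated]⟩⟩
  obtain ⟨T, hT, hcard⟩ := Finset.exists_mem_eq_sup _ hne Finset.card
  obtain ⟨hTS, hTt, hsep⟩ := mem_sepFamily.1 hT
  exact ⟨T, hTS, hTt, hsep, hcard.symm⟩

theorem maxSepCard_mono (S : Finset ℝ) : Monotone (maxSepCard S) := fun s t hst => by
  obtain ⟨T, hTS, hTs, hsep, hcard⟩ := exists_card_eq_maxSepCard S s
  exact hcard ▸ card_le_maxSepCard hTS (fun a ha => (hTs a ha).trans hst) hsep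

theorem maxSepCard_le_card (S : Finset ℝ) (t : ℝ) : maxSepCard S t ≤ S.card := by
  obtain ⟨T, hTS, -, -, hcard⟩ := exists_card_eq_maxSepCard S t
  exact hcard ▸ Finset.card_le_card hTS

theorem one_le_maxSepCard (ht : t ∈ S) : 1 ≤ maxSepCard S t :=
  card_le_maxSepCard (Finset.singleton_subset_iff.2 ht) (by simp) (by simp [UnitSeparated])

theorem maxSepCard_add_one_le (hb : b ∈ S) (hab : a + 1 ≤ b) :
    maxSepCard S a + 1 ≤ maxSepCard S b := by
  obtain ⟨T, hTS, hTa, hsep, hcard⟩ := exists_card_eq_maxSepCard S a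
  have hbT : b ∉ T := fun h => by linarith [hTa b h]
  have hsep' : UnitSeparated (insert b T) := by
    rw [UnitSeparated, Finset.coe_insert, Set.pairwise_insert]
    refine ⟨hsep, fun c hc _ => ?_⟩
    have hcb : c + 1 ≤ b := by linarith [hTa c hc]
    constructor
    · rw [abs_of_nonneg] <;> linarith
    · rw [abs_of_nonpos] <;> linarith
  calc maxSepCard S a + 1 = (insert b T).card := by rw [Finset.card_insert_of_notMem hbT, hcard]
    _ ≤ maxSepCard S b :=
      card_le_maxSepCard (Finset.insert_subset hb hTS)
        (Finset.forall_mem_insert _ _ _ |>.2 ⟨le_rfl, fun c hc => by linarith [hTa c hc]⟩) hsep'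

theorem maxSepCard_le_sub_add_one (hm : ∀ s ∈ S, m ≤ s) (hmt : m ≤ t) :
    (maxSepCard S t : ℝ) ≤ t - m + 1 := by
  obtain ⟨T, hTS, hTt, hsep, hcard⟩ := exists_card_eq_maxSepCard S t
  have h := hsep.card_le_floor_add_one (fun a ha => hm a (hTS ha)) hTt
  rw [hcard] at h
  calc (maxSepCard S t : ℝ) ≤ ⌊t - m⌋₊ + 1 := by exact_mod_cast h
    _ ≤ t - m + 1 := by gcongr; exact Nat.floor_le (sub_nonneg.2 hmt)

end maxSepCard

noncomputable def compress (S : Finset ℝ) (θ t : ℝ) : ℝ :=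
  θ * t + (1 - θ) * maxSepCard S t

section compress

variable {S : Finset ℝ} {θ : ℝ}

theorem compress_strictMono (hθ₀ : 0 < θ) (hθ₁ : θ ≤ 1) : StrictMono (compress S θ) :=
  fun s t hst => by
    have h : (maxSepCard S s : ℝ) ≤ maxSepCard S t := by exact_mod_cast maxSepCard_mono S hst.le
    unfold compress
    nlinarith

theorem compress_add_one_le (hθ₀ : 0 ≤ θ) (hθ₁ : θ ≤ 1) {a b : ℝ} (hb : b ∈ S)
    (hab : a + 1 ≤ b) : compress S θ a + 1 ≤ compress S θ b := by
  have h : (maxSepCard S a : ℝ) + 1 ≤ maxSepCard S b := by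
    exact_mod_cast maxSepCard_add_one_le hb hab
  unfold compress
  nlinarith

end compress

theorem exists_compression (S : Finset ℝ) {m M ε : ℝ} (hm : ∀ s ∈ S, m ≤ s) (hmS : m ∈ S)
    (hM : M ∈ S) (hε : 0 < ε) :
    ∃ φ : ℝ → ℝ, StrictMono φ ∧ (∀ a b, b ∈ S → a + 1 ≤ b → φ a + 1 ≤ φ b) ∧
      φ M - φ m ≤ M - m ∧
      ∃ w : ℕ, 1 ≤ w ∧ w ≤ S.card ∧ (w : ℝ) ≤ φ M - φ m + 1 ∧ φ M - φ m + 1 ≤ w + ε := by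
  have hmM : m ≤ M := hm M hM
  set θ := ε / (ε + (M - m)) with hθ
  have hθ₀ : 0 < θ := div_pos hε (by linarith)
  have hθ₁ : θ ≤ 1 := (div_le_one (by linarith)).2 (by linarith)
  have hθε : θ * (M - m) ≤ ε := by
    rw [hθ, div_mul_eq_mul_div, div_le_iff₀ (by linarith)]
    nlinarith
  have hGm : (maxSepCard S m : ℝ) = 1 := le_antisymm
    (by simpa using maxSepCard_le_sub_add_one hm le_rfl) (by exact_mod_cast one_le_maxSepCard hmS)
  have hGM₁ : (1 : ℝ) ≤ maxSepCard S M := by exact_mod_cast one_le_maxSepCard hM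
  have hGM := maxSepCard_le_sub_add_one hm hmM
  refine ⟨compress S θ, compress_strictMono hθ₀ hθ₁,
    fun a b hb hab => compress_add_one_le hθ₀.le hθ₁ hb hab, ?_,
    maxSepCard S M, one_le_maxSepCard hM, maxSepCard_le_card S M, ?_, ?_⟩ <;>
  · simp only [compress, hGm]
    nlinarith

theorem disjointUnitLayout_map_fst {ι : Type*} {f : ι → ℝ × ℝ} {φ : ℝ → ℝ}
    (hφ : ∀ i j, (f i).1 + 1 ≤ (f j).1 → φ (f i).1 + 1 ≤ φ (f j).1)
    (hf : disjointUnitLayout f) : disjointUnitLayout (Prod.map φ id ∘ f) := by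
  intro i j hij
  rcases hf i j hij with hx | hy
  · left
    simp only [Function.comp_apply, Prod.map_fst]
    rcases le_abs'.1 hx with h | h
    · have := hφ i j (by linarith)
      rw [abs_of_nonpos] <;> linarith
    · have := hφ j i (by linarith)
      rw [abs_of_nonneg] <;> linarith
  · exact Or.inr hy

theorem orthOrder_map_fst {ι : Type*} (f : ι → ℝ × ℝ) {φ : ℝ → ℝ} (hφ : StrictMono φ) :
    orthOrder f (Prod.map φ id ∘ f) := fun _ _ =>
  ⟨hφ.lt_iff_lt.symm, hφ.injective.eq_iff.symm, Iff.rfl, Iff.rfl⟩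

section finite

variable {α β ι : Type*} [ConditionallyCompleteLinearOrder α] [ConditionallyCompleteLinearOrder β]
  [Finite ι] [Nonempty ι] {φ : α → β}

theorem Monotone.map_ciSup_of_finite (hφ : Monotone φ) (g : ι → α) :
    φ (⨆ i, g i) = ⨆ i, φ (g i) := by
  obtain ⟨i₀, hi₀⟩ := exists_eq_ciSup_of_finite (f := g)
  refine le_antisymm ?_ (ciSup_le fun i => hφ (le_ciSup (Set.finite_range g).bddAbove i))
  rw [← hi₀]
  exact le_ciSup (f := fun i => φ (g i)) (Set.finite_range _).bddAbove i₀

theorem Monotone.map_ciInf_of_finite (hφ : Monotone φ) (g : ι → α) :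
    φ (⨅ i, g i) = ⨅ i, φ (g i) :=
  hφ.dual.map_ciSup_of_finite g

end finite

theorem unitWidth_map_fst {n : ℕ} [Nonempty (Fin n)] (f : Fin n → ℝ × ℝ) {φ : ℝ → ℝ}
    (hφ : Monotone φ) :
    unitWidth (Prod.map φ id ∘ f) = φ (⨆ i, (f i).1) - φ (⨅ i, (f i).1) + 1 := by
  simp only [unitWidth, Function.comp_apply, Prod.map_fst, hφ.map_ciSup_of_finite,
    hφ.map_ciInf_of_finite]

theorem stmt5 (n : ℕ) (hn : 0 < n) (lay : Fin n → ℝ × ℝ)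
    (hdisj : disjointUnitLayout lay) (ε : ℝ) (hε : 0 < ε) :
    ∃ lay' : Fin n → ℝ × ℝ,
      disjointUnitLayout lay' ∧ orthOrder lay lay' ∧
      (∀ i, (lay' i).2 = (lay i).2) ∧
      unitWidth lay' ≤ unitWidth lay ∧
      ∃ w : ℕ, 1 ≤ w ∧ w ≤ n ∧
        (w : ℝ) ≤ unitWidth lay' ∧ unitWidth lay' ≤ (w : ℝ) + ε := by
  have : Nonempty (Fin n) := ⟨⟨0, hn⟩⟩
  set X : Fin n → ℝ := fun i => (lay i).1
  have hXS : ∀ i, X i ∈ Finset.univ.image X := fun i => Finset.mem_image_of_mem X (Finset.mem_univ i)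
  obtain ⟨i₀, hi₀⟩ := exists_eq_ciInf_of_finite (f := X)
  obtain ⟨i₁, hi₁⟩ := exists_eq_ciSup_of_finite (f := X)
  obtain ⟨φ, hφ, hsep, hshrink, w, hw₁, hwS, hw⟩ := exists_compression (Finset.univ.image X)
    (by simpa using fun i => ciInf_le (Set.finite_range X).bddBelow i)
    (hi₀ ▸ hXS i₀) (hi₁ ▸ hXS i₁) hε
  refine ⟨Prod.map φ id ∘ lay, disjointUnitLayout_map_fst (fun i j => hsep _ _ (hXS j)) hdisj,
    orthOrder_map_fst lay hφ, fun i => rfl, ?_⟩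
  rw [unitWidth_map_fst lay hφ.monotone, unitWidth]
  exact ⟨by linarith, w, hw₁, hwS.trans (Finset.card_image_le.trans (by simp)), hw⟩
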